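/- arXiv:1704.07408 — 2 statements merged into one kernel-verified Lean document; each statement's English description precedes it below -/
import Mathlib

section
/- Let H be a normal subgroup of π₁(X, x₀). If the inversion map [α]_H ↦ [α⁻¹]_H on the fiber (p_H⁻¹(x₀))^wh is continuous, then (p_H⁻¹(x₀))^wh is a topological group (i.e., the concatenation map ([α]_H, [β]_H) ↦ [α⋆β]_H is also continuous). -/
open Set TopologicalSpace unitInterval

universe u

namespace SLTF

attribute [local instance] Path.Homotopic.setoid

variable {X : Type u} [TopologicalSpace X]

/-- The homotopy class of a loop as an element of the fundamental group. -/
noncomputable def fl {x : X} (γ : Path x x) : FundamentalGroup X x :=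
  @FundamentalGroup.fromPath X _ x ⟦γ⟧

/-- Multiplication of fundamental-group elements in path-concatenation order:
`pmul a b` is the class of "`a` followed by `b`". -/
noncomputable def pmul {x : X} (a b : FundamentalGroup X x) : FundamentalGroup X x :=
  @FundamentalGroup.fromPath X _ x
    (Path.Homotopic.Quotient.trans (@FundamentalGroup.toPath X _ x a)
      (@FundamentalGroup.toPath X _ x b))

/-- A path in `X` starting at the base point `x`, recorded together with its end point. -/
structure PPath (X : Type u) [TopologicalSpace X] (x : X) where
  target : X
  path : Path x target

/-- Two paths starting at `x` are identified when they have the same end point and the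
class of `α ⬝ β⁻¹` satisfies the predicate `P` (e.g. membership in a subgroup `H`). -/
def HRel (x : X) (P : Path x x → Prop) (α β : PPath X x) : Prop :=
  ∃ h : α.target = β.target, P (α.path.trans ((β.path.cast rfl h).symm))

/-- The set `X̃` of `P`-equivalence classes of paths starting at `x`. -/
def Xtilde (x : X) (P : Path x x → Prop) : Type u := Quot (HRel x P)

/-- The class of a path in `X̃`. -/
def mkX (x : X) (P : Path x x → Prop) (α : PPath X x) : Xtilde x P := Quot.mk _ α

/-- The basic whisker-open set `([α], U)`: all classes of prolongations of `α` by a path in `U`. -/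
def whBasic (x : X) (P : Path x x → Prop) (α : PPath X x) (U : Set X) : Set (Xtilde x P) :=
  { q | ∃ (y : X) (β : Path α.target y), range ⇑β ⊆ U ∧ q = mkX x P ⟨y, α.path.trans β⟩ }

/-- The whisker topology on `X̃`, generated by the sets `([α], U)` for `U` an open
neighbourhood of the end point of `α`. -/
instance whTop (x : X) (P : Path x x → Prop) : TopologicalSpace (Xtilde x P) :=
  generateFrom
    { S | ∃ (α : PPath X x) (U : Set X), IsOpen U ∧ α.target ∈ U ∧ S = whBasic x P α U }

/-- The endpoint projection `p : X̃ → X`. -/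
def endpt (x : X) (P : Path x x → Prop) : Xtilde x P → X :=
  Quot.lift (fun α => α.target) (fun _ _ h => h.elim fun e _ => e)

/-- The space of paths in `X` starting at `x`, with the compact-open topology. -/
def PSp (X : Type u) [TopologicalSpace X] (x : X) : Type u := { f : C(I, X) // f 0 = x }

instance (x : X) : TopologicalSpace (PSp X x) := instTopologicalSpaceSubtype

/-- The natural surjection from the path space onto `X̃`. -/
def toXt (x : X) (P : Path x x → Prop) : PSp X x → Xtilde x P :=
  fun f => mkX x P ⟨f.1 1, ⟨f.1, f.2, rfl⟩⟩

/-- The quotient of the compact-open topology on `X̃`. -/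
def topTop (x : X) (P : Path x x → Prop) : TopologicalSpace (Xtilde x P) :=
  coinduced (toXt x P) inferInstance

/-- Membership in a subgroup `H`, as a predicate on loops. -/
noncomputable def loopMem (x : X) (H : Subgroup (FundamentalGroup X x)) : Path x x → Prop :=
  fun γ => fl γ ∈ H

/-- `X̃_H`, the classes of paths starting at `x₀` modulo `H`. -/
abbrev XtildeH (x₀ : X) (H : Subgroup (FundamentalGroup X x₀)) : Type u :=
  Xtilde x₀ (loopMem x₀ H)

/-- The fiber of the endpoint projection over `y`, with the subspace (whisker) topology. -/
abbrev Fib (x : X) (P : Path x x → Prop) (y : X) : Type u :=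
  { q : Xtilde x P // endpt x P q = y }

/-- The class in the fiber over `y` of a path from `x` to `y`. -/
def mkFib (x : X) (P : Path x x → Prop) {y : X} (δ : Path x y) : Fib x P y :=
  ⟨mkX x P ⟨y, δ⟩, rfl⟩

/-- The whisker topology on the fundamental group `π₁(X, x)`: basic neighbourhoods of `a`
are the sets `{a ⋆ [γ] : γ a loop in U at x}` for `U` an open neighbourhood of `x`. -/
noncomputable def whPi1 (x : X) : TopologicalSpace (FundamentalGroup X x) :=
  generateFrom
    { S | ∃ (a : FundamentalGroup X x) (U : Set X), IsOpen U ∧ x ∈ U ∧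
        S = { b | ∃ γ : Path x x, range ⇑γ ⊆ U ∧ b = pmul a (fl γ) } }

/-- The quotient topology on `π₁(X, x)` induced from the loop space with the
compact-open topology. -/
noncomputable def qtopPi1 (x : X) : TopologicalSpace (FundamentalGroup X x) :=
  coinduced (fun γ : Path x x => fl γ) inferInstance

/-- `X` is `H`-SLT at `x₀`. -/
noncomputable def IsHSLTAt (x₀ : X) (H : Subgroup (FundamentalGroup X x₀)) : Prop :=
  ∀ (y : X) (α : Path x₀ y) (U : Set X), IsOpen U → x₀ ∈ U →
    ∃ V : Set X, IsOpen V ∧ y ∈ V ∧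
      ∀ β : Path y y, range ⇑β ⊆ V →
        ∃ γ : Path x₀ x₀, range ⇑γ ⊆ U ∧
          fl ((α.trans (β.trans α.symm)).trans γ.symm) ∈ H

/-- `X` is SLT at `x`. -/
def IsSLTAt (X : Type u) [TopologicalSpace X] (x : X) : Prop :=
  ∀ (y : X) (α : Path x y) (U : Set X), IsOpen U → x ∈ U →
    ∃ V : Set X, IsOpen V ∧ y ∈ V ∧
      ∀ β : Path y y, range ⇑β ⊆ V →
        ∃ γ : Path x x, range ⇑γ ⊆ U ∧ (α.trans (β.trans α.symm)).Homotopic γ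

/-- `X` is an SLT space. -/
def IsSLT (X : Type u) [TopologicalSpace X] : Prop := ∀ x : X, IsSLTAt X x

/-- `α` (a path from `x` to `y`) is an `H`-SLT path: for every path `lam` from `x₀` to `x`
and open `U ∋ x` there is an open `V ∋ y` such that every loop `β` in `V` at `y` transfers
to a loop `γ` in `U` at `x` with `[α ⋆ β ⋆ α⁻¹ ⋆ γ⁻¹] ∈ [lam⁻¹ H lam]`, i.e.
`[lam ⋆ (α ⋆ β ⋆ α⁻¹ ⋆ γ⁻¹) ⋆ lam⁻¹] ∈ H`. -/
noncomputable def IsHSLTPath (x₀ : X) (H : Subgroup (FundamentalGroup X x₀)) {x y : X}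
    (α : Path x y) : Prop :=
  ∀ (lam : Path x₀ x) (U : Set X), IsOpen U → x ∈ U →
    ∃ V : Set X, IsOpen V ∧ y ∈ V ∧
      ∀ β : Path y y, range ⇑β ⊆ V →
        ∃ γ : Path x x, range ⇑γ ⊆ U ∧
          fl (lam.trans ((((α.trans (β.trans α.symm)).trans γ.symm)).trans lam.symm)) ∈ H

/-- `X` is an `H`-SLT space: for every `x` and every path `lam` from `x₀` to `x`, `X` is
`[lam⁻¹ H lam]`-SLT at `x`. -/
noncomputable def IsHSLTSpace (x₀ : X) (H : Subgroup (FundamentalGroup X x₀)) : Prop :=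
  ∀ (x y : X) (α : Path x y), IsHSLTPath x₀ H α

/-- Membership in the conjugate subgroup `[lam⁻¹ H lam]` of `π₁(X, x)`,
as a predicate on loops at `x`. -/
noncomputable def conjMem (x₀ : X) (H : Subgroup (FundamentalGroup X x₀)) {x : X}
    (lam : Path x₀ x) : Path x x → Prop :=
  fun δ => fl (lam.trans (δ.trans lam.symm)) ∈ H

/-- `X` is homotopically Hausdorff relative to `H`. -/
noncomputable def HomHausdorffRel (x₀ : X) (H : Subgroup (FundamentalGroup X x₀)) : Prop :=
  ∀ (y : X) (α : Path x₀ y) (g : FundamentalGroup X x₀), g ∉ H →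
    ∃ U : Set X, IsOpen U ∧ y ∈ U ∧
      ∀ γ : Path y y, range ⇑γ ⊆ U →
        ¬ ∃ h ∈ H, fl (α.trans (γ.trans α.symm)) = pmul h g

/-- `X` is homotopically path Hausdorff relative to `H`. -/
noncomputable def HomPathHausdorffRel (x₀ : X) (H : Subgroup (FundamentalGroup X x₀)) : Prop :=
  ∀ (y : X) (α β : Path x₀ y), fl (α.trans β.symm) ∉ H →
    ∃ (n : ℕ) (t : Fin (n + 1) → I) (U : Fin n → Set X),
      t 0 = 0 ∧ t (Fin.last n) = 1 ∧ StrictMono t ∧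
      (∀ i : Fin n, IsOpen (U i)) ∧
      (∀ i : Fin n, ⇑α '' Set.Icc (t i.castSucc) (t i.succ) ⊆ U i) ∧
      ∀ γ : Path x₀ y,
        (∀ i : Fin n, ⇑γ '' Set.Icc (t i.castSucc) (t i.succ) ⊆ U i) →
        (∀ i : Fin (n + 1), γ (t i) = α (t i)) →
        fl (γ.trans β.symm) ∉ H

/-- The endpoint projection `p : X̃ → X` (with the whisker topology on `X̃`) has the
unique path lifting property. -/
def UPLP (x : X) (P : Path x x → Prop) : Prop :=
  ∀ g₁ g₂ : C(I, Xtilde x P), g₁ 0 = g₂ 0 →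
    (∀ t, endpt x P (g₁ t) = endpt x P (g₂ t)) → g₁ = g₂

/-- A semicovering map: a local homeomorphism with (continuous) unique lifting of paths
and of homotopies. -/
structure IsSemicovering {Y : Type u} [TopologicalSpace Y] (p : Y → X) : Prop where
  localHomeo : IsLocalHomeomorph p
  pathLift : ∀ (y : Y) (γ : C(I, X)), γ 0 = p y →
    ∃! γh : C(I, Y), γh 0 = y ∧ ∀ t, p (γh t) = γ t
  contPathLift : ∀ y : Y, ∃ L : { γ : C(I, X) // γ 0 = p y } → C(I, Y),
    Continuous L ∧ ∀ γ, (L γ) 0 = y ∧ ∀ t, p ((L γ) t) = (γ : C(I, X)) t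
  homotopyLift : ∀ (y : Y) (Φ : C(I × I, X)), Φ (0, 0) = p y →
    ∃! Φh : C(I × I, Y), Φh (0, 0) = y ∧ ∀ z, p (Φh z) = Φ z
  contHomotopyLift : ∀ y : Y, ∃ L : { Φ : C(I × I, X) // Φ (0, 0) = p y } → C(I × I, Y),
    Continuous L ∧ ∀ Φ, (L Φ) (0, 0) = y ∧ ∀ z, p ((L Φ) z) = (Φ : C(I × I, X)) z

/-- An `lpc₀`-covering map with `p₊π₁(Y, ·) = H`: a map which is equivalent, as a map
over `X`, to the endpoint projection `p_H : X̃_H → X` having the unique path lifting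
property (with `Y` path connected and locally path connected). -/
structure IsLpc0Covering {Y : Type u} [TopologicalSpace Y] (p : Y → X) (x₀ : X)
    (H : Subgroup (FundamentalGroup X x₀)) : Prop where
  pathConnected : PathConnectedSpace Y
  locPathConnected : LocPathConnectedSpace Y
  uplp : UPLP x₀ (loopMem x₀ H)
  equiv : ∃ φ : Y ≃ₜ XtildeH x₀ H, ∀ y, endpt x₀ (loopMem x₀ H) (φ y) = p y

/-- The homomorphism induced by `p` on fundamental groups, as a function. -/
noncomputable def pStar {Y : Type u} [TopologicalSpace Y] (p : C(Y, X)) (y₀ : Y) :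
    FundamentalGroup Y y₀ → FundamentalGroup X (p y₀) :=
  fun g => @FundamentalGroup.fromPath X _ (p y₀)
    (Path.Homotopic.Quotient.map (@FundamentalGroup.toPath Y _ y₀ g) p)

/-!
The fiber over `x₀` is the group `π₁(X, x₀)/H`, and in the whisker topology the sets
`[γ]·N_U`, with `N_U = {[δ] : δ a loop in U}`, form a neighbourhood basis at `[γ]`. Left
translations are always continuous, and `N_U · N_U ⊆ N_U`. Right translation by `[b]` is
`inv ∘ (left translation by [b]⁻¹) ∘ inv`, so continuity of inversion makes the conjugation
`q ↦ [b]⁻¹ q [b]` continuous; it fixes the identity, hence for every `U` there is `W` with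
`[b]⁻¹ N_W [b] ⊆ N_U`. Then `[a] N_W · [b] N_U = [a][b] ([b]⁻¹ N_W [b]) N_U ⊆ [a][b] N_U`.
-/

section Fiber

variable {x₀ : X} {H : Subgroup (FundamentalGroup X x₀)}

local notation "𝓕" => Fib x₀ (loopMem x₀ H) x₀

local notation "⟦" γ "⟧ₕ" => mkFib x₀ (loopMem x₀ H) γ

-- Mathlib multiplies in `π₁` in the order opposite to concatenation of loops.
theorem fl_trans (a b : Path x₀ x₀) : fl (a.trans b) = fl b * fl a :=
  rfl

theorem fl_symm (a : Path x₀ x₀) : fl a.symm = (fl a)⁻¹ :=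
  rfl

theorem fl_refl : fl (Path.refl x₀) = 1 :=
  rfl

theorem fl_eq_of_homotopic {a b : Path x₀ x₀} (h : a.Homotopic b) : fl a = fl b :=
  congrArg FundamentalGroup.fromPath (Quotient.sound h)

theorem coe_fl_eq_coe_fl_iff {a b : Path x₀ x₀} :
    (fl a : FundamentalGroup X x₀ ⧸ H) = fl b ↔ loopMem x₀ H (b.trans a.symm) :=
  QuotientGroup.eq

theorem mkFib_eq_mkFib_iff {a b : Path x₀ x₀} :
    ⟦a⟧ₕ = ⟦b⟧ₕ ↔ (fl a : FundamentalGroup X x₀ ⧸ H) = fl b := by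
  refine ⟨fun h => ?_, fun h => Subtype.ext (Quot.sound ⟨rfl, coe_fl_eq_coe_fl_iff.1 h.symm⟩)⟩
  -- `Xtilde` is a `Quot` by a relation not known to be an equivalence, so we push an invariant
  -- of `HRel` through `Quot.lift` instead of using `Quotient.exact`.
  let IsLoopInClass : PPath X x₀ → Prop := fun α =>
    ∃ e : x₀ = α.target, (fl (α.path.cast rfl e) : FundamentalGroup X x₀ ⧸ H) = fl a
  have invariant : ∀ α β, HRel x₀ (loopMem x₀ H) α β → IsLoopInClass α = IsLoopInClass β := by
    rintro ⟨y, p⟩ ⟨z, q⟩ ⟨e, hpq⟩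
    obtain rfl : y = z := e
    refine propext ⟨?_, ?_⟩ <;> rintro ⟨e, hα⟩ <;> change x₀ = y at e <;> subst e <;>
      refine ⟨rfl, ?_⟩
    · exact (coe_fl_eq_coe_fl_iff.2 hpq).trans hα
    · exact (coe_fl_eq_coe_fl_iff.2 hpq).symm.trans hα
  obtain ⟨_, hb⟩ : IsLoopInClass ⟨x₀, b⟩ :=
    (congrArg (Quot.lift IsLoopInClass invariant) (congrArg Subtype.val h)).mp ⟨rfl, rfl⟩
  exact hb.symm

theorem mkFib_eq_of_fl_eq {a b : Path x₀ x₀} (h : fl a = fl b) : ⟦a⟧ₕ = ⟦b⟧ₕ :=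
  mkFib_eq_mkFib_iff.2 (congrArg _ h)

theorem mkFib_refl_trans (γ : Path x₀ x₀) : ⟦(Path.refl x₀).trans γ⟧ₕ = ⟦γ⟧ₕ :=
  mkFib_eq_of_fl_eq (mul_one (fl γ))

theorem mkFib_trans_assoc {y z : X} (α : Path x₀ y) (β : Path y z) (γ : Path z x₀) :
    ⟦(α.trans β).trans γ⟧ₕ = ⟦α.trans (β.trans γ)⟧ₕ :=
  mkFib_eq_of_fl_eq (fl_eq_of_homotopic ⟨Path.Homotopy.transAssoc α β γ⟩)

theorem mkFib_trans_congr_fst {a b : Path x₀ x₀} (h : ⟦a⟧ₕ = ⟦b⟧ₕ) (δ : Path x₀ x₀) :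
    ⟦a.trans δ⟧ₕ = ⟦b.trans δ⟧ₕ :=
  mkFib_eq_mkFib_iff.2 (congrArg (fl δ • ·) (mkFib_eq_mkFib_iff.1 h))

theorem mkFib_trans_congr_snd (hH : H.Normal) {a b : Path x₀ x₀} (h : ⟦a⟧ₕ = ⟦b⟧ₕ)
    (c : Path x₀ x₀) : ⟦c.trans a⟧ₕ = ⟦c.trans b⟧ₕ := by
  rw [mkFib_eq_mkFib_iff] at h ⊢
  simp only [fl_trans, QuotientGroup.mk_mul, h]

theorem mkFib_surjective : Function.Surjective fun γ : Path x₀ x₀ => ⟦γ⟧ₕ := by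
  rintro ⟨q, hq⟩
  induction q using Quot.ind with
  | _ α =>
    obtain ⟨y, δ⟩ := α
    obtain rfl : y = x₀ := hq
    exact ⟨δ, rfl⟩

variable (H) in
def fibNhd (γ : Path x₀ x₀) (U : Set X) : Set 𝓕 :=
  {q | ∃ δ : Path x₀ x₀, range δ ⊆ U ∧ ⟦γ.trans δ⟧ₕ = q}

theorem fibNhd_mono {γ : Path x₀ x₀} {U V : Set X} (h : U ⊆ V) : fibNhd H γ U ⊆ fibNhd H γ V :=
  fun _ ⟨δ, hδ, hq⟩ => ⟨δ, hδ.trans h, hq⟩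

theorem mkFib_mem_fibNhd {γ : Path x₀ x₀} {U : Set X} (hx : x₀ ∈ U) : ⟦γ⟧ₕ ∈ fibNhd H γ U :=
  ⟨Path.refl x₀, by simpa using hx,
    mkFib_eq_of_fl_eq (fl_eq_of_homotopic ⟨Path.Homotopy.transRefl γ⟩)⟩

theorem fibNhd_eq_preimage (γ : Path x₀ x₀) (U : Set X) :
    fibNhd H γ U = Subtype.val ⁻¹' whBasic x₀ (loopMem x₀ H) ⟨x₀, γ⟩ U := by
  ext q
  constructor
  · rintro ⟨δ, hδ, rfl⟩
    exact ⟨x₀, δ, hδ, rfl⟩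
  · rintro ⟨y, δ, hδ, hqδ⟩
    have hy : x₀ = y := q.2.symm.trans (congrArg (endpt x₀ (loopMem x₀ H)) hqδ)
    subst hy
    exact ⟨δ, hδ, Subtype.ext hqδ.symm⟩

theorem isOpen_fibNhd (γ : Path x₀ x₀) {U : Set X} (hU : IsOpen U) (hx : x₀ ∈ U) :
    IsOpen (fibNhd H γ U) := by
  rw [fibNhd_eq_preimage]
  have hbasic : IsOpen (whBasic x₀ (loopMem x₀ H) ⟨x₀, γ⟩ U) :=
    GenerateOpen.basic _ ⟨⟨x₀, γ⟩, U, hU, hx, rfl⟩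
  exact hbasic.preimage continuous_subtype_val

theorem exists_fibNhd_subset_of_generateOpen {T : Set (XtildeH x₀ H)}
    (hT : GenerateOpen
      {S | ∃ (α : PPath X x₀) (U : Set X), IsOpen U ∧ α.target ∈ U ∧
        S = whBasic x₀ (loopMem x₀ H) α U} T)
    {γ : Path x₀ x₀} (hγ : ⟦γ⟧ₕ.1 ∈ T) :
    ∃ U, IsOpen U ∧ x₀ ∈ U ∧ fibNhd H γ U ⊆ Subtype.val ⁻¹' T := by
  induction hT generalizing γ with
  | basic S hS =>
    obtain ⟨α, U, hU, -, rfl⟩ := hS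
    obtain ⟨y, β, hβ, hγβ⟩ := hγ
    have hy : x₀ = y := congrArg (endpt x₀ (loopMem x₀ H)) hγβ
    subst hy
    refine ⟨U, hU, hβ ⟨1, β.target⟩, ?_⟩
    rintro _ ⟨δ, hδ, rfl⟩
    refine ⟨x₀, β.trans δ, by simpa [Path.trans_range] using ⟨hβ, hδ⟩, ?_⟩
    exact congrArg Subtype.val
      ((mkFib_trans_congr_fst (Subtype.ext hγβ) δ).trans (mkFib_trans_assoc α.path β δ))
  | univ => exact ⟨univ, isOpen_univ, mem_univ _, fun _ _ => mem_univ _⟩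
  | inter S₁ S₂ _ _ ih₁ ih₂ =>
    obtain ⟨U₁, hU₁, hx₁, h₁⟩ := ih₁ hγ.1
    obtain ⟨U₂, hU₂, hx₂, h₂⟩ := ih₂ hγ.2
    exact ⟨U₁ ∩ U₂, hU₁.inter hU₂, ⟨hx₁, hx₂⟩, fun q hq =>
      ⟨h₁ (fibNhd_mono inter_subset_left hq), h₂ (fibNhd_mono inter_subset_right hq)⟩⟩
  | sUnion 𝒮 _ ih =>
    obtain ⟨T, hT, hγT⟩ := hγ
    obtain ⟨U, hU, hx, h⟩ := ih T hT hγT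
    exact ⟨U, hU, hx, fun q hq => ⟨T, hT, h hq⟩⟩

theorem isOpen_iff_forall_exists_fibNhd_subset {S : Set 𝓕} :
    IsOpen S ↔ ∀ γ : Path x₀ x₀, ⟦γ⟧ₕ ∈ S → ∃ U, IsOpen U ∧ x₀ ∈ U ∧ fibNhd H γ U ⊆ S := by
  constructor
  · rintro ⟨T, hT, rfl⟩ γ hγ
    exact exists_fibNhd_subset_of_generateOpen hT hγ
  · refine fun h => isOpen_iff_forall_mem_open.2 fun q hq => ?_
    obtain ⟨γ, rfl⟩ := mkFib_surjective q
    obtain ⟨U, hU, hx, hUS⟩ := h γ hq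
    exact ⟨_, hUS, isOpen_fibNhd γ hU hx, mkFib_mem_fibNhd hx⟩

theorem continuous_mul_left (mul : 𝓕 → 𝓕 → 𝓕)
    (hmul : ∀ a b : Path x₀ x₀, mul ⟦a⟧ₕ ⟦b⟧ₕ = ⟦a.trans b⟧ₕ) (c : Path x₀ x₀) :
    Continuous (mul ⟦c⟧ₕ) := by
  refine continuous_def.2 fun S hS => isOpen_iff_forall_exists_fibNhd_subset.2 fun γ hγ => ?_
  rw [mem_preimage, hmul] at hγ
  obtain ⟨U, hU, hx, hUS⟩ := isOpen_iff_forall_exists_fibNhd_subset.1 hS _ hγ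
  refine ⟨U, hU, hx, ?_⟩
  rintro _ ⟨δ, hδ, rfl⟩
  rw [mem_preimage, hmul, ← mkFib_trans_assoc]
  exact hUS ⟨δ, hδ, rfl⟩

theorem exists_conj_mkFib_eq (inv : 𝓕 → 𝓕) (hinv : ∀ γ : Path x₀ x₀, inv ⟦γ⟧ₕ = ⟦γ.symm⟧ₕ)
    (hinvc : Continuous inv) (mul : 𝓕 → 𝓕 → 𝓕)
    (hmul : ∀ a b : Path x₀ x₀, mul ⟦a⟧ₕ ⟦b⟧ₕ = ⟦a.trans b⟧ₕ) (b : Path x₀ x₀) {U : Set X}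
    (hU : IsOpen U) (hx : x₀ ∈ U) :
    ∃ W, IsOpen W ∧ x₀ ∈ W ∧ ∀ β : Path x₀ x₀, range β ⊆ W →
      ∃ ε : Path x₀ x₀, range ε ⊆ U ∧ ⟦(b.symm.trans β).trans b⟧ₕ = ⟦ε⟧ₕ := by
  let conj : 𝓕 → 𝓕 := fun q => inv (mul ⟦b.symm⟧ₕ (inv (mul ⟦b.symm⟧ₕ q)))
  have hconj : ∀ β : Path x₀ x₀, conj ⟦β⟧ₕ = ⟦(b.symm.trans β).trans b⟧ₕ := fun β => by
    simp only [conj, hmul, hinv]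
    exact mkFib_eq_of_fl_eq (by simp only [fl_trans, fl_symm]; group)
  have hconj_cont : Continuous conj :=
    hinvc.comp <| (continuous_mul_left mul hmul _).comp <|
      hinvc.comp (continuous_mul_left mul hmul _)
  have hrefl : conj ⟦Path.refl x₀⟧ₕ ∈ fibNhd H (Path.refl x₀) U := by
    rw [hconj, mkFib_eq_of_fl_eq (b := Path.refl x₀)
      (by simp only [fl_trans, fl_symm, fl_refl]; group)]
    exact mkFib_mem_fibNhd hx
  obtain ⟨W, hW, hxW, hWU⟩ := isOpen_iff_forall_exists_fibNhd_subset.1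
    ((isOpen_fibNhd _ hU hx).preimage hconj_cont) _ hrefl
  refine ⟨W, hW, hxW, fun β hβ => ?_⟩
  obtain ⟨ε, hε, hεβ⟩ := hWU ⟨β, hβ, rfl⟩
  refine ⟨ε, hε, ?_⟩
  rw [← hconj, ← mkFib_refl_trans β, ← hεβ, mkFib_refl_trans]

end Fiber

theorem statement0_general {X : Type u} [TopologicalSpace X] (x₀ : X)
    (H : Subgroup (FundamentalGroup X x₀)) (hH : H.Normal)
    (inv : Fib x₀ (loopMem x₀ H) x₀ → Fib x₀ (loopMem x₀ H) x₀)
    (hinv : ∀ γ : Path x₀ x₀,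
      inv (mkFib x₀ (loopMem x₀ H) γ) = mkFib x₀ (loopMem x₀ H) γ.symm)
    (hinvc : Continuous inv)
    (mul : Fib x₀ (loopMem x₀ H) x₀ → Fib x₀ (loopMem x₀ H) x₀ → Fib x₀ (loopMem x₀ H) x₀)
    (hmul : ∀ a b : Path x₀ x₀,
      mul (mkFib x₀ (loopMem x₀ H) a) (mkFib x₀ (loopMem x₀ H) b) =
        mkFib x₀ (loopMem x₀ H) (a.trans b)) :
    Continuous fun q : Fib x₀ (loopMem x₀ H) x₀ × Fib x₀ (loopMem x₀ H) x₀ =>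
      mul q.1 q.2 := by
  refine continuous_def.2 fun S hS => isOpen_prod_iff.2 fun qa qb hab => ?_
  obtain ⟨a, rfl⟩ := mkFib_surjective qa
  obtain ⟨b, rfl⟩ := mkFib_surjective qb
  rw [mem_preimage, hmul] at hab
  obtain ⟨U, hU, hxU, hUS⟩ := isOpen_iff_forall_exists_fibNhd_subset.1 hS _ hab
  obtain ⟨W, hW, hxW, hWU⟩ := exists_conj_mkFib_eq inv hinv hinvc mul hmul b hU hxU
  refine ⟨_, _, isOpen_fibNhd a hW hxW, isOpen_fibNhd b hU hxU, mkFib_mem_fibNhd hxW,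
    mkFib_mem_fibNhd hxU, ?_⟩
  rintro ⟨_, _⟩ ⟨⟨β, hβ, rfl⟩, ⟨δ, hδ, rfl⟩⟩
  obtain ⟨ε, hε, hβε⟩ := hWU β hβ
  refine hUS ⟨ε.trans δ, by simpa [Path.trans_range] using ⟨hε, hδ⟩, ?_⟩
  calc mkFib x₀ (loopMem x₀ H) ((a.trans b).trans (ε.trans δ))
      = mkFib x₀ (loopMem x₀ H) ((a.trans b).trans (((b.symm.trans β).trans b).trans δ)) :=
        mkFib_trans_congr_snd hH (mkFib_trans_congr_fst hβε.symm δ) _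
    _ = mkFib x₀ (loopMem x₀ H) ((a.trans β).trans (b.trans δ)) :=
        mkFib_eq_of_fl_eq (by simp only [fl_trans, fl_symm]; group)
    _ = mul (mkFib x₀ (loopMem x₀ H) (a.trans β)) (mkFib x₀ (loopMem x₀ H) (b.trans δ)) :=
        (hmul _ _).symm

/-- Let `H` be a normal subgroup of `π₁(X, x₀)`. If the inversion map
`[α]_H ↦ [α⁻¹]_H` on the fiber `(p_H⁻¹(x₀))^wh` is continuous, then this fiber is a
topological group, i.e. the concatenation map `([α]_H, [β]_H) ↦ [α⋆β]_H` is also continuous. -/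
theorem statement0 {X : Type u} [TopologicalSpace X] [PathConnectedSpace X] (x₀ : X)
    (H : Subgroup (FundamentalGroup X x₀)) (hH : H.Normal)
    (inv : Fib x₀ (loopMem x₀ H) x₀ → Fib x₀ (loopMem x₀ H) x₀)
    (hinv : ∀ γ : Path x₀ x₀,
      inv (mkFib x₀ (loopMem x₀ H) γ) = mkFib x₀ (loopMem x₀ H) γ.symm)
    (hinvc : Continuous inv)
    (mul : Fib x₀ (loopMem x₀ H) x₀ → Fib x₀ (loopMem x₀ H) x₀ → Fib x₀ (loopMem x₀ H) x₀)
    (hmul : ∀ a b : Path x₀ x₀,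
      mul (mkFib x₀ (loopMem x₀ H) a) (mkFib x₀ (loopMem x₀ H) b) =
        mkFib x₀ (loopMem x₀ H) (a.trans b)) :
    Continuous fun q : Fib x₀ (loopMem x₀ H) x₀ × Fib x₀ (loopMem x₀ H) x₀ =>
      mul q.1 q.2 :=
  statement0_general x₀ H hH inv hinv hinvc mul hmul

end SLTF
end

section
/- Let H be a normal subgroup of π₁(X, x₀) and let X be H-SLT at x₀. Then X is homotopically path Hausdorff relative to H if and only if X is homotopically Hausdorff relative to H. -/
open Set TopologicalSpace unitInterval

universe u

namespace SLTF

attribute [local instance] Path.Homotopic.setoid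

variable {X : Type u} [TopologicalSpace X]

/-!
If `X` is homotopically path Hausdorff relative to `H`, `g = [ℓ] ∉ H` and `γ` is a small loop at
the end of `α`, compare `α` with `ℓ ⋆ α`: the path `α ⋆ γ`, reparametrised to agree with `α` up to
the last partition point, is admissible, so `[(α ⋆ γ)(ℓ ⋆ α)⁻¹] ∉ H`, i.e. `[α γ α⁻¹] ∉ gH`.

Conversely, let `g = [α β⁻¹] ∉ H` and let `U ∋ x₀` be a neighbourhood, given by homotopic
Hausdorffness at the constant path, with `g ∉ π₁(U) H`. By `H`-SLT each small loop near `α s`,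
conjugated by the initial segment of `α` up to `s`, lies in `π₁(U) H`. For a Lebesgue partition of
`α` subordinate to these neighbourhoods, a path `ρ` close to `α` changes the class `[ρ α⁻¹]`
segment by segment only by such conjugates, so `[ρ α⁻¹] ∈ π₁(U) H`; as `H` is normal, `π₁(U) H` is
a subgroup, and `[ρ β⁻¹] ∈ H` would force `g ∈ π₁(U) H`.
-/

end SLTF

namespace Path.Homotopic.Quotient

variable {X : Type*} [TopologicalSpace X] {x y z : X}

@[simp]
theorem symm_trans_trans (a : Path.Homotopic.Quotient x y) (b : Path.Homotopic.Quotient y z) :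
    a.symm.trans (a.trans b) = b := by
  rw [← trans_assoc, symm_trans, refl_trans]

@[simp]
theorem trans_symm_trans (a : Path.Homotopic.Quotient x y) (b : Path.Homotopic.Quotient x z) :
    a.trans (a.symm.trans b) = b := by
  rw [← trans_assoc, trans_symm, refl_trans]

@[simp]
theorem symm_trans_rev (a : Path.Homotopic.Quotient x y) (b : Path.Homotopic.Quotient y z) :
    (a.trans b).symm = b.symm.trans a.symm := by
  induction a using Path.Homotopic.Quotient.ind
  induction b using Path.Homotopic.Quotient.ind
  exact congrArg mk (Path.trans_symm _ _)

end Path.Homotopic.Quotient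

namespace unitInterval

theorem uIcc_subset_ball {s a : I} {r : ℝ} (ha : a ∈ Metric.ball s r) :
    uIcc s a ⊆ Metric.ball s r := by
  intro u hu
  have hu' : (u : ℝ) ∈ uIcc (a : ℝ) s :=
    (Subtype.mono_coe _).monotoneOn _ |>.image_uIcc_subset ⟨u, uIcc_comm s a ▸ hu, rfl⟩
  rw [Metric.mem_ball, Subtype.dist_eq] at ha ⊢
  exact (Real.dist_right_le_of_mem_uIcc hu').trans_lt ha

theorem exists_partition_subordinate {ι : Type*} {c : ι → Set I}
    (hc : ∀ i, IsOpen (c i)) (hcov : univ ⊆ ⋃ i, c i) :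
    ∃ (n : ℕ) (t : Fin (n + 1) → I), t 0 = 0 ∧ t (Fin.last n) = 1 ∧ StrictMono t ∧
      ∀ k : Fin n, ∃ i, Icc (t k.castSucc) (t k.succ) ⊆ c i := by
  obtain ⟨δ, hδ, hleb⟩ := lebesgue_number_lemma_of_metric isCompact_univ hc hcov
  obtain ⟨m, hm⟩ := exists_nat_one_div_lt hδ
  have hN : (0 : ℝ) < m + 1 := by positivity
  let t : Fin (m + 2) → I := fun k =>
    ⟨k / (m + 1), div_nonneg k.val.cast_nonneg hN.le,
      (div_le_one hN).2 (by exact_mod_cast Nat.lt_succ_iff.1 k.2)⟩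
  refine ⟨m + 1, t, Subtype.ext (by simp [t]), Subtype.ext (by simp [t, hN.ne']), ?_, ?_⟩
  · intro k l hkl
    exact div_lt_div_of_pos_right (by exact_mod_cast hkl) hN
  · intro k
    obtain ⟨i, hi⟩ := hleb (t k.castSucc) trivial
    refine ⟨i, fun u hu => hi ?_⟩
    have h1 : (k : ℝ) / (m + 1) ≤ u := hu.1
    have h2 : (u : ℝ) ≤ (k + 1) / (m + 1) := by simpa [t] using Subtype.coe_le_coe.2 hu.2
    rw [Metric.mem_ball, Subtype.dist_eq, Real.dist_eq]
    change |(u : ℝ) - k / (m + 1)| < δ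
    rw [abs_of_nonneg (sub_nonneg.2 h1)]
    calc (u : ℝ) - k / (m + 1) ≤ (k + 1) / (m + 1) - k / (m + 1) := by linarith
      _ = 1 / (m + 1) := by ring
      _ < δ := hm

end unitInterval

namespace Path

variable {X : Type*} [TopologicalSpace X] {x y z : X}

theorem exists_homotopic_trans_eqOn_Iic (α : Path x y) (γ : Path y z) {T : I} (hT : T < 1) :
    ∃ ρ : Path x z, ρ.Homotopic (α.trans γ) ∧ EqOn ρ α (Iic T) ∧
      MapsTo ρ (Ici T) (α '' Icc T 1 ∪ range γ) := by
  have hpos : 0 < 1 - (T : ℝ) := sub_pos.2 hT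
  -- `ρ` runs through `α` at half speed up to time `T`, then catches up linearly
  set g : I → ℝ := fun s => max (s / 2) (1 - (1 - s) / (1 - T)) with hg
  have hg_low : ∀ s : I, s ≤ T → g s = s / 2 := fun s hs => by
    have : 1 ≤ (1 - (s : ℝ)) / (1 - T) := by
      rw [le_div_iff₀ hpos]; linarith [show (s : ℝ) ≤ T from hs]
    exact max_eq_left (by linarith [s.2.1])
  have hg_mem : ∀ s, g s ∈ I := fun s => by
    have : 0 ≤ (1 - (s : ℝ)) / (1 - T) := div_nonneg (by linarith [s.2.2]) hpos.le
    exact ⟨le_max_of_le_left (by linarith [s.2.1]), max_le (by linarith [s.2.2]) (by linarith)⟩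
  let f : I → I := fun s => ⟨g s, hg_mem s⟩
  have hf : Continuous f := Continuous.subtype_mk (by fun_prop) _
  have hf0 : f 0 = 0 := Subtype.ext (hg_low 0 T.2.1 |>.trans (by simp))
  have hf1 : f 1 = 1 := Subtype.ext (by norm_num [f, hg])
  refine ⟨(α.trans γ).reparam f hf hf0 hf1, ⟨(Homotopy.reparam _ f hf hf0 hf1).symm⟩,
    ?_, ?_⟩
  · intro s (hs : s ≤ T)
    have hfs : (f s : ℝ) = s / 2 := hg_low s hs
    rw [coe_reparam, Function.comp_apply, trans_apply, dif_pos (by rw [hfs]; linarith [s.2.2])]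
    congr 1
    ext
    simp only [hfs]
    ring
  · intro s (hs : T ≤ s)
    have hfs : (T : ℝ) ≤ 2 * (f s : ℝ) := by
      have : (s : ℝ) / 2 ≤ f s := le_max_left _ _
      linarith [show (T : ℝ) ≤ s from hs]
    rw [coe_reparam, Function.comp_apply, trans_apply]
    split_ifs
    · exact Or.inl (mem_image_of_mem α ⟨hfs, le_one'⟩)
    · exact Or.inr (mem_range_self _)

def upTo (γ : Path x y) (s : I) : Path x (γ s) :=
  (γ.subpath 0 s).cast γ.source.symm rfl

theorem upTo_zero (γ : Path x y) : γ.upTo 0 = (Path.refl x).cast rfl γ.source := by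
  ext t
  simp [upTo, subpath_self]

theorem upTo_one (γ : Path x y) : γ.upTo 1 = γ.cast rfl γ.target := by
  ext t
  simp [upTo, subpath_zero_one]

theorem upTo_trans_subpath (γ : Path x y) (a b : I) :
    ((γ.upTo a).trans (γ.subpath a b)).Homotopic (γ.upTo b) :=
  Homotopic.pathCast ⟨Homotopy.subpathTransSubpath γ 0 a b⟩ γ.source.symm rfl

theorem mk_upTo_cast (γ : Path x y) {a b : I} {u v : X} (ha : u = γ a) (hb : v = γ b) :
    Homotopic.Quotient.mk ((γ.upTo b).cast rfl hb) =
      (Homotopic.Quotient.mk ((γ.upTo a).cast rfl ha)).trans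
        (Homotopic.Quotient.mk ((γ.subpath a b).cast ha hb)) := by
  subst ha hb
  exact (Homotopic.Quotient.eq.2 (upTo_trans_subpath γ a b)).symm

end Path

namespace SLTF

variable {X : Type u} [TopologicalSpace X]

theorem fl_trans_s2 {x : X} (p q : Path x x) : fl (p.trans q) = fl q * fl p := rfl

theorem pmul_eq_mul {x : X} (a b : FundamentalGroup X x) : pmul a b = b * a := rfl

theorem fl_surjective {x : X} : Function.Surjective (fl : Path x x → FundamentalGroup X x) :=
  Quotient.mk_surjective

theorem fl_symm_s2 {x : X} (p : Path x x) : fl p.symm = (fl p)⁻¹ := rfl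

theorem fl_eq_fl_iff {x : X} {p q : Path x x} :
    fl p = fl q ↔ Path.Homotopic.Quotient.mk p = Path.Homotopic.Quotient.mk q := Iff.rfl

theorem fl_trans_symm_eq_mul {x y : X} (p q r : Path x y) :
    fl (p.trans r.symm) = fl (q.trans r.symm) * fl (p.trans q.symm) := by
  rw [← fl_trans_s2, fl_eq_fl_iff]
  simp

theorem fl_cast_trans_symm_cast {x y z : X} (p q : Path x y) (h : z = y) :
    fl ((p.cast rfl h).trans (q.cast rfl h).symm) = fl (p.trans q.symm) := by
  subst h
  rfl

variable {x₀ : X} {H : Subgroup (FundamentalGroup X x₀)}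

theorem segments_subset_and_nodes_eq_of_eqOn_Iic {y : X} {m : ℕ} {t : Fin (m + 2) → I}
    (hmono : StrictMono t) (ht1 : t (Fin.last (m + 1)) = 1) {U : Fin (m + 1) → Set X}
    (α ρ : Path x₀ y) (hαU : ∀ i, α '' Icc (t i.castSucc) (t i.succ) ⊆ U i)
    (hρα : EqOn ρ α (Iic (t (Fin.last m).castSucc)))
    (hρU : MapsTo ρ (Ici (t (Fin.last m).castSucc)) (U (Fin.last m))) :
    (∀ i, ρ '' Icc (t i.castSucc) (t i.succ) ⊆ U i) ∧ ∀ i, ρ (t i) = α (t i) := by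
  refine ⟨fun i => ?_, fun i => ?_⟩
  · rintro _ ⟨s, hs, rfl⟩
    induction i using Fin.lastCases with
    | last =>
      rcases le_total s (t (Fin.last m).castSucc) with h | h
      · exact hρα h ▸ hαU _ ⟨s, hs, rfl⟩
      · exact hρU h
    | cast k =>
      have hk : t k.castSucc.succ ≤ t (Fin.last m).castSucc :=
        hmono.monotone (Fin.castSucc_le_castSucc_iff.2 (Fin.le_last k.succ))
      exact hρα (hs.2.trans hk) ▸ hαU _ ⟨s, hs, rfl⟩
  · induction i using Fin.lastCases with
    | last => rw [ht1, ρ.target, α.target]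
    | cast k => exact hρα (hmono.monotone (Fin.castSucc_le_castSucc_iff.2 (Fin.le_last k)))

theorem HomPathHausdorffRel.homHausdorffRel (hph : HomPathHausdorffRel x₀ H) :
    HomHausdorffRel x₀ H := by
  intro y α g hg
  obtain ⟨ℓ, rfl⟩ := fl_surjective g
  have hαβ : fl (α.trans (ℓ.trans α).symm) = (fl ℓ)⁻¹ := by
    rw [← fl_symm_s2, fl_eq_fl_iff]
    simp
  obtain ⟨n, t, U, ht0, ht1, hmono, hU, hαU, hsep⟩ :=
    hph y α (ℓ.trans α) (by rwa [hαβ, inv_mem_iff])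
  obtain ⟨m, rfl⟩ : ∃ m, n = m + 1 := Nat.exists_eq_succ_of_ne_zero fun hn => by
    subst hn
    exact zero_ne_one (ht0.symm.trans ht1)
  have hlast : t (Fin.last m).succ = 1 := ht1
  have hT : t (Fin.last m).castSucc < 1 := hlast ▸ hmono Fin.castSucc_lt_succ
  have hαU' : α '' Icc (t (Fin.last m).castSucc) 1 ⊆ U (Fin.last m) := hlast ▸ hαU _
  refine ⟨U (Fin.last m), hU _, α.target ▸ hαU' ⟨1, ⟨hT.le, le_rfl⟩, rfl⟩, ?_⟩
  rintro γ hγ ⟨h, hhH, hfl⟩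
  obtain ⟨ρ, hρ, hρα, hργ⟩ := α.exists_homotopic_trans_eqOn_Iic γ hT
  obtain ⟨hseg, hnode⟩ := segments_subset_and_nodes_eq_of_eqOn_Iic hmono ht1 α ρ hαU hρα
    fun _ hs => (hργ hs).elim (hαU' ·) (hγ ·)
  refine hsep ρ hseg hnode ?_
  have hclass : fl (ρ.trans α.symm) = fl (α.trans (γ.trans α.symm)) := by
    rw [fl_eq_fl_iff]
    simp [Path.Homotopic.Quotient.eq.2 hρ]
  rwa [fl_trans_symm_eq_mul ρ α, hclass, hfl, pmul_eq_mul, hαβ, inv_mul_cancel_left]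

/-- The image of `π₁(U, x) → π₁(X, x)`. -/
def loopsIn (x : X) (U : Set X) (hx : x ∈ U) : Subgroup (FundamentalGroup X x) where
  carrier := {g | ∃ γ : Path x x, range γ ⊆ U ∧ fl γ = g}
  mul_mem' := by
    rintro _ _ ⟨γ, hγ, rfl⟩ ⟨δ, hδ, rfl⟩
    exact ⟨δ.trans γ, by rw [Path.trans_range]; exact union_subset hδ hγ, rfl⟩
  one_mem' := ⟨Path.refl x, by simpa using hx, rfl⟩
  inv_mem' := by
    rintro _ ⟨γ, hγ, rfl⟩
    exact ⟨γ.symm, by rwa [Path.symm_range], rfl⟩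

theorem HomHausdorffRel.exists_notMem_loopsIn_sup (hh : HomHausdorffRel x₀ H) (hH : H.Normal)
    {g : FundamentalGroup X x₀} (hg : g ∉ H) :
    ∃ U : Set X, IsOpen U ∧ ∃ hx : x₀ ∈ U, g ∉ loopsIn x₀ U hx ⊔ H := by
  obtain ⟨U, hU, hx, hno⟩ := hh x₀ (Path.refl x₀) g hg
  refine ⟨U, hU, hx, fun hmem => ?_⟩
  obtain ⟨_, ⟨γ, hγ, rfl⟩, h, hhH, hgh⟩ := Subgroup.mem_sup_of_normal_right.1 hmem
  refine hno γ hγ ⟨h⁻¹, H.inv_mem hhH, ?_⟩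
  rw [pmul_eq_mul, ← eq_mul_inv_of_mul_eq hgh, fl_eq_fl_iff]
  simp [Path.refl_symm]

theorem IsHSLTAt.exists_nhds_conj_mem (hslt : IsHSLTAt x₀ H) {U : Set X} (hU : IsOpen U)
    (hx : x₀ ∈ U) {z : X} (p : Path x₀ z) :
    ∃ V : Set X, IsOpen V ∧ z ∈ V ∧ ∀ {w : X} (e : Path z w) (d : Path w w),
      range e ⊆ V → range d ⊆ V → ∀ q : Path x₀ w, (p.trans e).Homotopic q →
        fl (q.trans (d.trans q.symm)) ∈ loopsIn x₀ U hx ⊔ H := by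
  obtain ⟨V, hV, hz, htransfer⟩ := hslt z p U hU hx
  refine ⟨V, hV, hz, fun e d he hd q hq => ?_⟩
  obtain ⟨γ, hγ, hmem⟩ := htransfer (e.trans (d.trans e.symm)) (by
    simp only [Path.trans_range, Path.symm_range]
    exact union_subset he (union_subset hd he))
  have hconj : fl (q.trans (d.trans q.symm)) =
      fl γ * fl ((p.trans ((e.trans (d.trans e.symm)).trans p.symm)).trans γ.symm) := by
    rw [← fl_trans_s2, fl_eq_fl_iff]
    simp only [Path.Homotopic.Quotient.mk_trans, Path.Homotopic.Quotient.mk_symm,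
      ← Path.Homotopic.Quotient.eq.2 hq]
    simp
  rw [hconj]
  exact Subgroup.mul_mem_sup ⟨γ, hγ, rfl⟩ hmem

noncomputable def diffLoop {y : X} (ρ α : Path x₀ y) (s : I) (h : ρ s = α s) :
    FundamentalGroup X x₀ :=
  fl (((ρ.upTo s).cast rfl h.symm).trans (α.upTo s).symm)

theorem diffLoop_of_eq_zero {y : X} (ρ α : Path x₀ y) {s : I} (hs : s = 0) (h : ρ s = α s) :
    diffLoop ρ α s h = 1 := by
  subst hs
  rw [diffLoop, Path.upTo_zero, Path.upTo_zero]
  exact (fl_cast_trans_symm_cast _ _ _).trans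
    (Path.Homotopic.Quotient.trans_symm (Path.Homotopic.Quotient.mk (Path.refl x₀)))

theorem diffLoop_of_eq_one {y : X} (ρ α : Path x₀ y) {s : I} (hs : s = 1) (h : ρ s = α s) :
    diffLoop ρ α s h = fl (ρ.trans α.symm) := by
  subst hs
  rw [diffLoop, Path.upTo_one, Path.upTo_one]
  exact fl_cast_trans_symm_cast ρ α α.target

theorem diffLoop_eq_mul {y : X} (ρ α : Path x₀ y) {a b : I} (ha : ρ a = α a)
    (hb : ρ b = α b) :
    diffLoop ρ α b hb =
      fl ((α.upTo a).trans ((((ρ.subpath a b).cast ha.symm hb.symm).trans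
        (α.subpath a b).symm).trans (α.upTo a).symm)) * diffLoop ρ α a ha := by
  have hρ := Path.mk_upTo_cast ρ ha.symm hb.symm
  have hα := Path.mk_upTo_cast α (a := a) (b := b) rfl rfl
  simp only [Path.cast_rfl_rfl] at hα
  rw [diffLoop, diffLoop, ← fl_trans_s2, fl_eq_fl_iff]
  simp only [Path.Homotopic.Quotient.mk_trans, Path.Homotopic.Quotient.mk_symm, hρ, hα]
  simp
theorem IsHSLTAt.exists_partition_trans_symm_mem (hslt : IsHSLTAt x₀ H) {U : Set X}
    (hU : IsOpen U) (hx : x₀ ∈ U) {y : X} (α : Path x₀ y) :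
    ∃ (n : ℕ) (t : Fin (n + 1) → I) (V : Fin n → Set X),
      t 0 = 0 ∧ t (Fin.last n) = 1 ∧ StrictMono t ∧ (∀ i, IsOpen (V i)) ∧
      (∀ i, α '' Icc (t i.castSucc) (t i.succ) ⊆ V i) ∧
      ∀ ρ : Path x₀ y, (∀ i, ρ '' Icc (t i.castSucc) (t i.succ) ⊆ V i) →
        (∀ i, ρ (t i) = α (t i)) → fl (ρ.trans α.symm) ∈ loopsIn x₀ U hx ⊔ H := by
  choose V hV hαV hconj using fun s : I => hslt.exists_nhds_conj_mem hU hx (α.upTo s)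
  choose r hr hrV using fun s => Metric.isOpen_iff.1 ((hV s).preimage α.continuous) s (hαV s)
  obtain ⟨n, t, ht0, ht1, hmono, hsub⟩ := unitInterval.exists_partition_subordinate
    (fun s => Metric.isOpen_ball) fun s _ => mem_iUnion.2 ⟨s, Metric.mem_ball_self (hr s)⟩
  choose c hc using hsub
  have hαc : ∀ i, α '' Icc (t i.castSucc) (t i.succ) ⊆ V (c i) := fun i =>
    image_subset_iff.2 ((hc i).trans (hrV _))
  have hle : ∀ i : Fin n, t i.castSucc ≤ t i.succ := fun i =>
    hmono.monotone (Fin.castSucc_le_succ i)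
  refine ⟨n, t, fun i => V (c i), ht0, ht1, hmono, fun i => hV _, hαc, fun ρ hρ hnode => ?_⟩
  have hdiff : ∀ i, diffLoop ρ α (t i) (hnode i) ∈ loopsIn x₀ U hx ⊔ H := by
    intro i
    induction i using Fin.induction with
    | zero => rw [diffLoop_of_eq_zero ρ α ht0]; exact one_mem _
    | succ i ih =>
      rw [diffLoop_eq_mul ρ α (hnode i.castSucc)]
      refine mul_mem (hconj (c i) (α.subpath (c i) (t i.castSucc)) _ ?_ ?_ _
        (α.upTo_trans_subpath _ _)) ih
      · rw [Path.range_subpath, image_subset_iff]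
        exact (unitInterval.uIcc_subset_ball ((hc i) ⟨le_rfl, hle i⟩)).trans (hrV _)
      · rw [Path.trans_range, Path.symm_range, Path.cast_coe,
          Path.range_subpath_of_le _ _ _ (hle i), Path.range_subpath_of_le _ _ _ (hle i)]
        exact union_subset (hρ i) (hαc i)
  simpa only [diffLoop_of_eq_one ρ α ht1] using hdiff (Fin.last n)
theorem HomHausdorffRel.homPathHausdorffRel (hh : HomHausdorffRel x₀ H) (hH : H.Normal)
    (hslt : IsHSLTAt x₀ H) : HomPathHausdorffRel x₀ H := by
  intro y α β hαβ
  obtain ⟨U, hU, hx, hnot⟩ := hh.exists_notMem_loopsIn_sup hH hαβ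
  obtain ⟨n, t, V, ht0, ht1, hmono, hV, hαV, hρ⟩ :=
    hslt.exists_partition_trans_symm_mem hU hx α
  refine ⟨n, t, V, ht0, ht1, hmono, hV, hαV, fun ρ hρV hnode hρβ => hnot ?_⟩
  have hmem := Subgroup.mul_mem _ (Subgroup.mem_sup_right hρβ)
    (Subgroup.inv_mem _ (hρ ρ hρV hnode))
  rwa [fl_trans_symm_eq_mul ρ α β, mul_inv_cancel_right] at hmem

theorem statement2_general {X : Type u} [TopologicalSpace X] (x₀ : X)
    (H : Subgroup (FundamentalGroup X x₀)) (hH : H.Normal) (hslt : IsHSLTAt x₀ H) :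
    HomPathHausdorffRel x₀ H ↔ HomHausdorffRel x₀ H :=
  ⟨HomPathHausdorffRel.homHausdorffRel, fun hh => hh.homPathHausdorffRel hH hslt⟩

/-- Let `H` be a normal subgroup of `π₁(X, x₀)` and let `X` be `H`-SLT at
`x₀`. Then `X` is homotopically path Hausdorff relative to `H` if and only if `X` is
homotopically Hausdorff relative to `H`. -/
theorem statement2 {X : Type u} [TopologicalSpace X] [PathConnectedSpace X] (x₀ : X)
    (H : Subgroup (FundamentalGroup X x₀)) (hH : H.Normal) (hslt : IsHSLTAt x₀ H) :
    HomPathHausdorffRel x₀ H ↔ HomHausdorffRel x₀ H :=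
  statement2_general x₀ H hH hslt

end SLTF
end
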